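/- Let T be a non-blocking tree and T' a subtree of T. Then T' is finite if and only if there exist a node τ ∈ T and an infinite tree T∞ ⊆ T such that: τ ∈ T∞ and T∞ is finitely-branching; every infinite path of T∞ visits some strict descendant of τ in T; and T' = T∞ \ {τ' ∈ T : τ < τ'} (where τ < τ' means τ' is a descendant of τ distinct from τ). -/

import Mathlib

/-! ## Trees over ℕ* -/

abbrev Node : Type := List ℕ

/-- `T` is a tree with root `r`: `r ∈ T`, every node extends `r`, and `T` is
prefix-closed above `r`. -/
def IsTreeRooted (T : Set Node) (r : Node) : Prop :=
  r ∈ T ∧ (∀ τ ∈ T, r <+: τ) ∧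
    ∀ σ σ' : List ℕ, r ++ σ ∈ T → σ' <+: σ → r ++ σ' ∈ T

/-- `T ⊆ ℕ*` is a tree. -/
def IsTree (T : Set Node) : Prop := ∃ r : Node, IsTreeRooted T r

/-- `τ'` is a child of `τ` in `T`. -/
def childIn (T : Set Node) (τ τ' : Node) : Prop := τ' ∈ T ∧ ∃ n : ℕ, τ' = τ ++ [n]

/-- every node of `T` has a child in `T`. -/
def NonBlocking (T : Set Node) : Prop := ∀ τ ∈ T, ∃ n : ℕ, τ ++ [n] ∈ T

/-- every node of `T` has finitely many children in `T`. -/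
def FinBranching (T : Set Node) : Prop := ∀ τ ∈ T, {τ' : Node | childIn T τ τ'}.Finite

/-- `S` is a subtree of `T`. -/
def IsSubtree (T S : Set Node) : Prop := S ⊆ T ∧ IsTree S

/-- `P` is a path of `T`: a subtree totally ordered by the child relation
(each node has at most one child in `P`). -/
def IsPathOf (T P : Set Node) : Prop :=
  IsSubtree T P ∧ ∀ τ ∈ P, ∀ n m : ℕ, τ ++ [n] ∈ P → τ ++ [m] ∈ P → n = m

/-- `T` is a chain: a tree in which each node has at most one child. -/
def IsChainTree (T : Set Node) : Prop :=
  IsTree T ∧ ∀ τ ∈ T, ∀ n m : ℕ, τ ++ [n] ∈ T → τ ++ [m] ∈ T → n = m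

/-- `T` is dense: it contains a subtree every node of which has a descendant
in the subtree with at least two distinct children in the subtree. -/
def DenseTree (T : Set Node) : Prop :=
  ∃ S : Set Node, IsSubtree T S ∧ ∀ τ ∈ S, ∃ τ' ∈ S, τ <+: τ' ∧
    ∃ n m : ℕ, n ≠ m ∧ τ' ++ [n] ∈ S ∧ τ' ++ [m] ∈ S

/-- A Kripke tree over `AP`: a non-blocking tree together with a labelling. -/
structure KripkeTree (AP : Type) where
  T : Set Node
  root : Node
  rooted : IsTreeRooted T root
  nonblocking : NonBlocking T
  Lab : Node → Set AP

/-! ## MSOL syntax -/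

inductive MSOL (AP : Type) : Type
  | atom : AP → ℕ → MSOL AP          -- P_a(x)
  | le   : ℕ → ℕ → MSOL AP           -- x ≤ y
  | mem  : ℕ → ℕ → MSOL AP           -- x ∈ X
  | not  : MSOL AP → MSOL AP
  | and  : MSOL AP → MSOL AP → MSOL AP
  | exFO : ℕ → MSOL AP → MSOL AP     -- ∃x. φ
  | exSO : ℕ → MSOL AP → MSOL AP     -- ∃X. φ

namespace MSOL

def freeFO {AP : Type} : MSOL AP → Set ℕ
  | atom _ x => {x}
  | le x y => {x, y}
  | mem x _ => {x}
  | not φ => φ.freeFO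
  | and φ ψ => φ.freeFO ∪ ψ.freeFO
  | exFO x φ => φ.freeFO \ {x}
  | exSO _ φ => φ.freeFO

def freeSO {AP : Type} : MSOL AP → Set ℕ
  | atom _ _ => ∅
  | le _ _ => ∅
  | mem _ X => {X}
  | not φ => φ.freeSO
  | and φ ψ => φ.freeSO ∪ ψ.freeSO
  | exFO _ φ => φ.freeSO
  | exSO X φ => φ.freeSO \ {X}

/-- A sentence is a formula with no free variables. -/
def IsSentence {AP : Type} (φ : MSOL AP) : Prop := φ.freeFO = ∅ ∧ φ.freeSO = ∅

/-- The first-order fragment: no second-order variables. -/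
def IsFO {AP : Type} : MSOL AP → Prop
  | atom _ _ => True
  | le _ _ => True
  | mem _ _ => False
  | not φ => φ.IsFO
  | and φ ψ => φ.IsFO ∧ ψ.IsFO
  | exFO _ φ => φ.IsFO
  | exSO _ _ => False

end MSOL

/-! ## MSOL semantics, parametrized by the range of second-order quantifiers -/

/-- A second-order domain: for each tree, the collection of sets that
second-order quantifiers range over. -/
abbrev SODom : Type := Set Node → Set (Set Node)

def Sat {AP : Type} (D : SODom) (K : KripkeTree AP) :
    (ℕ → Node) → (ℕ → Set Node) → MSOL AP → Prop
  | V1, _,  .atom a x => V1 x ∈ K.T ∧ a ∈ K.Lab (V1 x)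
  | V1, _,  .le x y => V1 x ∈ K.T ∧ V1 y ∈ K.T ∧ V1 x <+: V1 y
  | V1, V2, .mem x X => V1 x ∈ V2 X
  | V1, V2, .not φ => ¬ Sat D K V1 V2 φ
  | V1, V2, .and φ ψ => Sat D K V1 V2 φ ∧ Sat D K V1 V2 ψ
  | V1, V2, .exFO x φ => ∃ τ ∈ K.T, Sat D K (Function.update V1 x τ) V2 φ
  | V1, V2, .exSO X φ => ∃ S ∈ D K.T, Sat D K V1 (Function.update V2 X S) φ

/-- A logic: a syntactic fragment of MSOL together with a second-order domain. -/
structure MLogic (AP : Type) where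
  syn : MSOL AP → Prop
  dom : SODom

namespace MLogic

/-- A Kripke tree satisfies a sentence. -/
def KSat {AP : Type} (L : MLogic AP) (K : KripkeTree AP) (φ : MSOL AP) : Prop :=
  ∃ V1 V2, Sat L.dom K V1 V2 φ

/-- `L ≤ L'` over the class `M`. -/
def Leq {AP : Type} (M : Set (KripkeTree AP)) (L L' : MLogic AP) : Prop :=
  ∀ φ : MSOL AP, φ.IsSentence → L.syn φ →
    ∃ φ' : MSOL AP, φ'.IsSentence ∧ L'.syn φ' ∧
      ∀ K ∈ M, (L.KSat K φ ↔ L'.KSat K φ')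

/-- `L < L'` over the class `M`. -/
def Lt {AP : Type} (M : Set (KripkeTree AP)) (L L' : MLogic AP) : Prop :=
  Leq M L L' ∧ ¬ Leq M L' L

/-- `L ≡ L'` over the class `M`. -/
def EquivExp {AP : Type} (M : Set (KripkeTree AP)) (L L' : MLogic AP) : Prop :=
  Leq M L L' ∧ Leq M L' L

/-- `L` and `L'` are expressively incomparable over the class `M`. -/
def Incomp {AP : Type} (M : Set (KripkeTree AP)) (L L' : MLogic AP) : Prop :=
  ¬ Leq M L L' ∧ ¬ Leq M L' L

end MLogic

/-! ## The concrete logics -/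

def MSOdom : SODom := fun T => {S | S ⊆ T}
def MTLdom : SODom := fun T => {S | S ⊆ T ∧ IsTree S}
def MPLdom : SODom := fun T => {S | IsPathOf T S}
def weakDom (D : SODom) : SODom := fun T => {S | S ∈ D T ∧ S.Finite}
def coweakDom (D : SODom) : SODom := fun T => {S | S ∈ D T ∧ S.Infinite}

def MSO (AP : Type) : MLogic AP := ⟨fun _ => True, MSOdom⟩
def MTL (AP : Type) : MLogic AP := ⟨fun _ => True, MTLdom⟩
def MPL (AP : Type) : MLogic AP := ⟨fun _ => True, MPLdom⟩
def WMSO (AP : Type) : MLogic AP := ⟨fun _ => True, weakDom MSOdom⟩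
def WMTL (AP : Type) : MLogic AP := ⟨fun _ => True, weakDom MTLdom⟩
def WMPL (AP : Type) : MLogic AP := ⟨fun _ => True, weakDom MPLdom⟩
def CoWMSO (AP : Type) : MLogic AP := ⟨fun _ => True, coweakDom MSOdom⟩
def CoWMTL (AP : Type) : MLogic AP := ⟨fun _ => True, coweakDom MTLdom⟩
def CoWMPL (AP : Type) : MLogic AP := ⟨fun _ => True, coweakDom MPLdom⟩
def FOL (AP : Type) : MLogic AP := ⟨MSOL.IsFO, MSOdom⟩

/-! ## Classes of Kripke trees -/

def allKT (AP : Type) : Set (KripkeTree AP) := Set.univ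
def finBrKT (AP : Type) : Set (KripkeTree AP) := {K | FinBranching K.T}
/-- Kripke trees whose underlying tree is an infinite chain
(every node has exactly one child). -/
def chainKT (AP : Type) : Set (KripkeTree AP) :=
  {K | ∀ τ ∈ K.T, ∃! τ' : Node, childIn K.T τ τ'}

/-
A finite subtree has a leaf τ; grafting onto T' an infinite branch of T issued from τ (it exists
since T is non-blocking) gives an infinite, finitely-branching T∞ whose infinite paths all leave
T' strictly below τ, and cutting that branch off again recovers T'. Conversely, T' is a
finitely-branching tree, so if it were infinite, König's lemma would give an infinite path of T'
(hence of T∞) that never visits a strict descendant of τ.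
-/

open Set

theorem List.IsPrefix.exists_append_singleton_prefix {α : Type*} {l₁ l₂ : List α}
    (h : l₁ <+: l₂) (hne : l₁ ≠ l₂) : ∃ a, l₁ ++ [a] <+: l₂ := by
  obtain ⟨_ | ⟨a, s⟩, rfl⟩ := h
  · simp at hne
  · exact ⟨a, s, by simp⟩

theorem List.IsPrefix.antisymm {α : Type*} {l₁ l₂ : List α} (h₁ : l₁ <+: l₂)
    (h₂ : l₂ <+: l₁) : l₁ = l₂ :=
  h₁.eq_of_length (le_antisymm h₁.length_le h₂.length_le)

theorem isTreeRooted_iff {S : Set Node} {r : Node} :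
    IsTreeRooted S r ↔
      r ∈ S ∧ (∀ x ∈ S, r <+: x) ∧ ∀ x ∈ S, ∀ y, r <+: y → y <+: x → y ∈ S := by
  refine ⟨fun h => ⟨h.1, h.2.1, ?_⟩, fun ⟨hr, hroot, hclosed⟩ => ⟨hr, hroot, ?_⟩⟩
  · rintro x hx _ ⟨σ', rfl⟩ hy
    obtain ⟨σ, rfl⟩ := h.2.1 x hx
    exact h.2.2 σ σ' hx ((List.prefix_append_right_inj r).mp hy)
  · exact fun σ σ' h hσ =>
      hclosed _ h _ (List.prefix_append r σ') ((List.prefix_append_right_inj r).mpr hσ)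

namespace IsTreeRooted

variable {S : Set Node} {r : Node}

theorem mem_of_prefix (h : IsTreeRooted S r) {x y : Node} (hx : x ∈ S) (hry : r <+: y)
    (hyx : y <+: x) : y ∈ S :=
  (isTreeRooted_iff.mp h).2.2 x hx y hry hyx

theorem diff (h : IsTreeRooted S r) {U : Set Node} (hr : r ∉ U)
    (hU : ∀ x ∈ U, ∀ y ∈ S, x <+: y → y ∈ U) : IsTreeRooted (S \ U) r :=
  isTreeRooted_iff.mpr ⟨⟨h.1, hr⟩, fun x hx => h.2.1 x hx.1, fun x hx y hry hyx =>
    ⟨h.mem_of_prefix hx.1 hry hyx, fun hyU => hx.2 (hU y hyU x hx.1 hyx)⟩⟩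

end IsTreeRooted

theorem FinBranching.mono {S S' : Set Node} (h : FinBranching S) (hS' : S' ⊆ S) :
    FinBranching S' :=
  fun x hx => (h x (hS' hx)).subset fun _ ⟨hy, hxy⟩ => ⟨hS' hy, hxy⟩

theorem IsPathOf.mono {S S' P : Set Node} (h : IsPathOf S P) (hS : S ⊆ S') : IsPathOf S' P :=
  ⟨⟨h.1.1.trans hS, h.1.2⟩, h.2⟩

def IsBranchFrom (x : Node) (f : ℕ → Node) : Prop :=
  f 0 = x ∧ ∀ k, ∃ n, f (k + 1) = f k ++ [n]

theorem exists_isBranchFrom {A : Set Node} (hA : ∀ y ∈ A, ∃ n, y ++ [n] ∈ A) {x : Node}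
    (hx : x ∈ A) : ∃ f, IsBranchFrom x f ∧ ∀ k, f k ∈ A := by
  choose! c hc using hA
  let f : ℕ → Node := fun k => (fun y => y ++ [c y])^[k] x
  have hfA : ∀ k, f k ∈ A := fun k => by
    induction k with
    | zero => exact hx
    | succ k ih => simp only [f, Function.iterate_succ_apply']; exact hc _ ih
  exact ⟨f, ⟨rfl, fun k => ⟨c (f k), Function.iterate_succ_apply' _ _ _⟩⟩, hfA⟩

namespace IsBranchFrom

variable {x : Node} {f : ℕ → Node}

theorem length_eq (hf : IsBranchFrom x f) (k : ℕ) : (f k).length = x.length + k := by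
  induction k with
  | zero => simp [hf.1]
  | succ k ih =>
    obtain ⟨n, hn⟩ := hf.2 k
    simp [hn, ih, Nat.add_assoc]

theorem injective (hf : IsBranchFrom x f) : Function.Injective f := fun j k h => by
  have := congrArg List.length h
  simp only [hf.length_eq] at this
  omega

theorem prefix_of_le (hf : IsBranchFrom x f) {j k : ℕ} (h : j ≤ k) : f j <+: f k := by
  induction h with
  | refl => exact List.prefix_rfl
  | step _ ih =>
    obtain ⟨n, hn⟩ := hf.2 _
    rw [hn]
    exact ih.trans (List.prefix_append _ _)

theorem prefix_apply (hf : IsBranchFrom x f) (k : ℕ) : x <+: f k :=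
  hf.1 ▸ hf.prefix_of_le k.zero_le

theorem eq_of_prefix (hf : IsBranchFrom x f) {y : Node} {k : ℕ} (hy : y <+: f k)
    (hxy : x.length ≤ y.length) : y = f (y.length - x.length) := by
  have hle : y.length - x.length ≤ k := by
    have := hy.length_le
    rw [hf.length_eq] at this
    omega
  refine (List.prefix_of_prefix_length_le hy (hf.prefix_of_le hle) ?_).eq_of_length ?_ <;>
    rw [hf.length_eq] <;> omega

theorem isTreeRooted_range (hf : IsBranchFrom x f) : IsTreeRooted (range f) x :=
  isTreeRooted_iff.mpr ⟨⟨0, hf.1⟩, by rintro _ ⟨k, rfl⟩; exact hf.prefix_apply k,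
    by rintro _ ⟨k, rfl⟩ y hxy hy; exact ⟨_, (hf.eq_of_prefix hy hxy.length_le).symm⟩⟩

theorem isPathOf_range (hf : IsBranchFrom x f) {S : Set Node} (hS : range f ⊆ S) :
    IsPathOf S (range f) := by
  refine ⟨⟨hS, x, hf.isTreeRooted_range⟩, ?_⟩
  rintro y - n m ⟨j, hj⟩ ⟨k, hk⟩
  obtain rfl : j = k := by
    have hj' := congrArg List.length hj
    have hk' := congrArg List.length hk
    simp only [hf.length_eq, List.length_append, List.length_singleton] at hj' hk'
    omega
  simpa using hj.symm.trans hk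

end IsBranchFrom

theorem IsTreeRooted.union_range {S : Set Node} {r τ : Node} {f : ℕ → Node}
    (hS : IsTreeRooted S r) (hτ : τ ∈ S) (hf : IsBranchFrom τ f) :
    IsTreeRooted (S ∪ range f) r := by
  refine isTreeRooted_iff.mpr ⟨Or.inl hS.1, ?_, ?_⟩
  · rintro x (hx | ⟨k, rfl⟩)
    · exact hS.2.1 x hx
    · exact (hS.2.1 τ hτ).trans (hf.prefix_apply k)
  · rintro x (hx | ⟨k, rfl⟩) y hry hyx
    · exact Or.inl (hS.mem_of_prefix hx hry hyx)
    rcases le_total y.length τ.length with hle | hle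
    · exact Or.inl (hS.mem_of_prefix hτ hry
        (List.prefix_of_prefix_length_le hyx (hf.prefix_apply k) hle))
    · exact Or.inr ⟨_, (hf.eq_of_prefix hyx hle).symm⟩

theorem finBranching_union_range {S : Set Node} {τ : Node} {f : ℕ → Node} (hS : S.Finite)
    (hf : IsBranchFrom τ f) : FinBranching (S ∪ range f) := by
  intro x _
  refine (hS.union (finite_singleton (f (x.length + 1 - τ.length)))).subset ?_
  rintro _ ⟨hy | ⟨k, rfl⟩, n, hn⟩
  · exact Or.inl hy
  · have := congrArg List.length hn
    simp only [hf.length_eq, List.length_append, List.length_singleton] at this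
    exact Or.inr (congrArg f (by omega))

theorem IsTreeRooted.exists_child_infinite_descendants {S : Set Node} {r ν : Node}
    (hS : IsTreeRooted S r) (hfb : FinBranching S) (hν : ν ∈ S)
    (hinf : {μ ∈ S | ν <+: μ}.Infinite) :
    ∃ n, ν ++ [n] ∈ S ∧ {μ ∈ S | ν ++ [n] <+: μ}.Infinite := by
  have hcover : {μ ∈ S | ν <+: μ} ⊆
      {ν} ∪ ⋃ c ∈ {c | childIn S ν c}, {μ ∈ S | c <+: μ} := by
    rintro μ ⟨hμ, hνμ⟩
    rcases eq_or_ne ν μ with rfl | hne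
    · exact Or.inl rfl
    obtain ⟨n, hn⟩ := hνμ.exists_append_singleton_prefix hne
    have hchild : ν ++ [n] ∈ S :=
      hS.mem_of_prefix hμ ((hS.2.1 ν hν).trans (List.prefix_append _ _)) hn
    exact Or.inr (mem_biUnion ⟨hchild, n, rfl⟩ ⟨hμ, hn⟩)
  by_contra! hfin
  refine hinf (((finite_singleton ν).union ((hfb ν hν).biUnion ?_)).subset hcover)
  rintro _ ⟨hc, n, rfl⟩
  exact hfin n hc

theorem IsTreeRooted.exists_infinite_path {S : Set Node} {r : Node} (hS : IsTreeRooted S r)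
    (hfb : FinBranching S) (hinf : S.Infinite) : ∃ P, IsPathOf S P ∧ P.Infinite := by
  let A := {ν ∈ S | {μ ∈ S | ν <+: μ}.Infinite}
  have hA : ∀ ν ∈ A, ∃ n, ν ++ [n] ∈ A := fun ν hν =>
    hS.exists_child_infinite_descendants hfb hν.1 hν.2
  have hrA : r ∈ A := ⟨hS.1, hinf.mono fun μ hμ => ⟨hμ, hS.2.1 μ hμ⟩⟩
  obtain ⟨f, hf, hfA⟩ := exists_isBranchFrom hA hrA
  exact ⟨range f, hf.isPathOf_range (range_subset_iff.mpr fun k => (hfA k).1),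
    infinite_range_of_injective hf.injective⟩

theorem finite_of_eq_diff_strictDescendants {T Tinf T' : Set Node} {τ : Node}
    (hTinf : IsSubtree T Tinf) (hτ : τ ∈ Tinf) (hfb : FinBranching Tinf)
    (hpath : ∀ P : Set Node, IsPathOf Tinf P → P.Infinite →
      ∃ τ' ∈ P, τ' ∈ T ∧ τ <+: τ' ∧ τ ≠ τ')
    (hT' : T' = Tinf \ {τ' : Node | τ' ∈ T ∧ τ <+: τ' ∧ τ' ≠ τ}) : T'.Finite := by
  obtain ⟨r, hr⟩ := hTinf.2
  have hrτ : r <+: τ := hr.2.1 τ hτ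
  have hT'r : IsTreeRooted T' r := hT' ▸ hr.diff
    (fun ⟨_, hτr, hne⟩ => hne (hrτ.antisymm hτr))
    (fun x ⟨_, hτx, hne⟩ y hy hxy => ⟨hTinf.1 hy, hτx.trans hxy,
      fun hyτ => hne (hτx.antisymm (hyτ ▸ hxy)).symm⟩)
  have hT'Tinf : T' ⊆ Tinf := hT' ▸ sdiff_subset
  by_contra hinf
  obtain ⟨P, hP, hPinf⟩ := hT'r.exists_infinite_path (hfb.mono hT'Tinf) hinf
  obtain ⟨τ', hτ'P, hτ'T, hττ', hne⟩ := hpath P (hP.mono hT'Tinf) hPinf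
  have hτ'T' := hP.1.1 hτ'P
  rw [hT'] at hτ'T'
  exact hτ'T'.2 ⟨hτ'T, hττ', Ne.symm hne⟩

theorem stmt12_general (T : Set Node) (hNB : NonBlocking T)
    (T' : Set Node) (hT' : IsSubtree T T') :
    T'.Finite ↔
      ∃ τ ∈ T, ∃ Tinf : Set Node,
        IsSubtree T Tinf ∧ Tinf.Infinite ∧
        τ ∈ Tinf ∧ FinBranching Tinf ∧
        (∀ P : Set Node, IsPathOf Tinf P → P.Infinite →
          ∃ τ' ∈ P, τ' ∈ T ∧ τ <+: τ' ∧ τ ≠ τ') ∧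
        T' = Tinf \ {τ' : Node | τ' ∈ T ∧ τ <+: τ' ∧ τ' ≠ τ} := by
  refine ⟨fun hfin => ?_, fun ⟨τ, _, Tinf, hTinf, _, hτ, hfb, hpath, hT'eq⟩ =>
    finite_of_eq_diff_strictDescendants hTinf hτ hfb hpath hT'eq⟩
  obtain ⟨r, hr⟩ := hT'.2
  obtain ⟨τ, hτ, hτmax⟩ := hfin.exists_maximalFor List.length T' ⟨r, hr.1⟩
  have hleaf : ∀ x ∈ T', τ <+: x → x = τ := fun x hx hτx =>
    (hτx.eq_of_length (le_antisymm hτx.length_le (hτmax hx hτx.length_le))).symm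
  obtain ⟨f, hf, hfT⟩ := exists_isBranchFrom hNB (hT'.1 hτ)
  refine ⟨τ, hT'.1 hτ, T' ∪ range f,
    ⟨union_subset hT'.1 (range_subset_iff.mpr hfT), r, hr.union_range hτ hf⟩,
    (infinite_range_of_injective hf.injective).mono subset_union_right, Or.inl hτ,
    finBranching_union_range hfin hf, fun P hP hPinf => ?_, ?_⟩
  · obtain ⟨x, ⟨hxP, hxT'⟩, hxτ⟩ := ((hPinf.sdiff hfin).sdiff (finite_singleton τ)).nonempty
    obtain ⟨k, rfl⟩ := (hP.1.1 hxP).resolve_left hxT'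
    exact ⟨f k, hxP, hfT k, hf.prefix_apply k, Ne.symm hxτ⟩
  · ext x
    refine ⟨fun hx => ⟨Or.inl hx, fun ⟨_, hτx, hne⟩ => hne (hleaf x hx hτx)⟩, ?_⟩
    rintro ⟨hx | ⟨k, rfl⟩, hnot⟩
    · exact hx
    · by_contra hk
      exact hnot ⟨hfT k, hf.prefix_apply k, fun h => hk (h ▸ hτ)⟩

/-- characterisation of the finite subtrees of a non-blocking
tree. -/
theorem stmt12 (T : Set Node) (hT : IsTree T) (hNB : NonBlocking T)
    (T' : Set Node) (hT' : IsSubtree T T') :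
    T'.Finite ↔
      ∃ τ ∈ T, ∃ Tinf : Set Node,
        IsSubtree T Tinf ∧ Tinf.Infinite ∧
        τ ∈ Tinf ∧ FinBranching Tinf ∧
        (∀ P : Set Node, IsPathOf Tinf P → P.Infinite →
          ∃ τ' ∈ P, τ' ∈ T ∧ τ <+: τ' ∧ τ ≠ τ') ∧
        T' = Tinf \ {τ' : Node | τ' ∈ T ∧ τ <+: τ' ∧ τ' ≠ τ} :=
  stmt12_general T hNB T' hT'
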